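/- Let E be a finite group with E' ⊆ Z(E), N ⊴ E, φ ∈ Irr(E) faithful on Z(E), and χ an irreducible constituent of φ↓N. Then the inertia group of χ in E equals the centralizer of Z(N) in E: T(χ) = C_E(Z(N)). -/

import Mathlib

/-!
Since commutators of `E` are central, `g x g⁻¹ = ⁅g, x⁆ * x` with `⁅g, x⁆ ∈ N ∩ Z(E)`, and
`⁅g, x⁆` acts on the irreducible `ρ` by a scalar `λ`. As `ρ` is a constituent of `σ↓N`, this is
also the scalar by which `⁅g, x⁆` acts on `σ`, so faithfulness of `σ` on `Z(E)` gives `λ = 1` only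
when `⁅g, x⁆ = 1`. Thus `χ(g x g⁻¹) = λ χ(x)` with `λ ≠ 1` unless `g` and `x` commute. Taking
`g ∈ N` shows that `χ` vanishes off `Z(N)`, while it is nonzero on `Z(N)`; both inclusions follow.
-/

open scoped BigOperators

/-- A representation is irreducible if it is nonzero and has no proper nontrivial
invariant subspaces. -/
def RepIrreducible {G V : Type*} [Monoid G] [AddCommGroup V] [Module ℂ V]
    (ρ : Representation ℂ G V) : Prop :=
  (⊤ : Submodule ℂ V) ≠ ⊥ ∧
    ∀ U : Submodule ℂ V, (∀ g v, v ∈ U → ρ g v ∈ U) → U = ⊥ ∨ U = ⊤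

/-- The character of a representation. -/
noncomputable def repChar {G V : Type*} [Monoid G] [AddCommGroup V] [Module ℂ V]
    (ρ : Representation ℂ G V) (g : G) : ℂ := LinearMap.trace ℂ V (ρ g)

/-- Conjugation by `g ∈ E` as an automorphism of a normal subgroup `N`. -/
def conjHom {E : Type*} [Group E] (N : Subgroup E) [hN : N.Normal] (g : E) : ↥N →* ↥N where
  toFun x := ⟨g * ↑x * g⁻¹, hN.conj_mem _ x.2 g⟩
  map_one' := by ext; simp
  map_mul' a b := by ext; push_cast; group

open scoped commutatorElement

theorem commutatorElement_mem_center_of_commutator_le_center {G : Type*} [Group G]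
    (hG : commutator G ≤ Subgroup.center G) (a b : G) : ⁅a, b⁆ ∈ Subgroup.center G :=
  hG (Subgroup.commutator_mem_commutator (Subgroup.mem_top a) (Subgroup.mem_top b))

section repChar

variable {G V : Type*} [AddCommGroup V] [Module ℂ V]

theorem repChar_mul_left_of_eq_smul_one [Monoid G] {ρ : Representation ℂ G V} {c : G} {l : ℂ}
    (hc : ρ c = l • 1) (x : G) : repChar ρ (c * x) = l * repChar ρ x := by
  simp only [repChar, map_mul, hc, smul_mul_assoc, one_mul, map_smul, smul_eq_mul]

theorem repChar_mul_right_of_eq_smul_one [Monoid G] {ρ : Representation ℂ G V} {c : G} {l : ℂ}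
    (hc : ρ c = l • 1) (x : G) : repChar ρ (x * c) = l * repChar ρ x := by
  simp only [repChar, map_mul, hc, mul_smul_comm, mul_one, map_smul, smul_eq_mul]

theorem repChar_conj [Group G] (ρ : Representation ℂ G V) (x y : G) :
    repChar ρ (y * x * y⁻¹) = repChar ρ x := by
  rw [repChar, map_mul ρ, LinearMap.trace_mul_comm, ← map_mul ρ, inv_mul_cancel_left, repChar]

end repChar

namespace RepIrreducible

variable {G V : Type*} [AddCommGroup V] [Module ℂ V]

theorem nontrivial [Monoid G] {ρ : Representation ℂ G V} (hρ : RepIrreducible ρ) :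
    Nontrivial V :=
  not_subsingleton_iff_nontrivial.mp fun _ => hρ.1 (Subsingleton.elim _ _)

variable [FiniteDimensional ℂ V]

/-- Schur's lemma: an eigenspace of `f` is a nonzero invariant subspace, hence everything. -/
theorem exists_eq_smul_one_of_commute [Monoid G] {ρ : Representation ℂ G V}
    (hρ : RepIrreducible ρ) {f : Module.End ℂ V} (hf : ∀ g, Commute f (ρ g)) :
    ∃ c : ℂ, f = c • 1 := by
  have := hρ.nontrivial
  obtain ⟨c, hc⟩ := Module.End.exists_eigenvalue f
  have hinv : ∀ g v, v ∈ f.eigenspace c → ρ g v ∈ f.eigenspace c := by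
    intro g v hv
    rw [Module.End.mem_eigenspace_iff] at hv ⊢
    rw [← Module.End.mul_apply, (hf g).eq, Module.End.mul_apply, hv, map_smul]
  refine ⟨c, ?_⟩
  rcases hρ.2 _ hinv with h | h
  · exact absurd h hc
  · ext v
    simpa using Module.End.mem_eigenspace_iff.mp (h ▸ Submodule.mem_top : v ∈ f.eigenspace c)

theorem exists_eq_smul_one_of_mem_center [Group G] {ρ : Representation ℂ G V}
    (hρ : RepIrreducible ρ) {z : G} (hz : z ∈ Subgroup.center G) : ∃ c : ℂ, ρ z = c • 1 :=
  hρ.exists_eq_smul_one_of_commute fun g => by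
    rw [Commute, SemiconjBy, ← map_mul, ← map_mul, Subgroup.mem_center_iff.mp hz g]

theorem repChar_ne_zero_of_mem_center [Group G] {ρ : Representation ℂ G V}
    (hρ : RepIrreducible ρ) {z : G} (hz : z ∈ Subgroup.center G) : repChar ρ z ≠ 0 := by
  have := hρ.nontrivial
  obtain ⟨l, hl⟩ := hρ.exists_eq_smul_one_of_mem_center hz
  have hl0 : l ≠ 0 := by
    rintro rfl
    have hinv : ρ z * ρ z⁻¹ = 1 := by rw [← map_mul, mul_inv_cancel, map_one]
    rw [hl, zero_smul, zero_mul] at hinv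
    exact zero_ne_one hinv
  rw [repChar, hl, map_smul, LinearMap.trace_one, smul_eq_mul]
  exact mul_ne_zero hl0 (Nat.cast_ne_zero.mpr Module.finrank_pos.ne')

end RepIrreducible

/-- The sum `S` is `|N| ⟨χ_ρ, χ_σ↓N⟩`; reindexing it by `n ↦ n * c` shows `w * S = l * S`. -/
theorem eq_of_eq_smul_one_of_sum_repChar_mul_ne_zero {G V W : Type*} [Group G]
    [AddCommGroup V] [Module ℂ V] [AddCommGroup W] [Module ℂ W] {N : Subgroup G} [Fintype N]
    {σ : Representation ℂ G V} {ρ : Representation ℂ N W}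
    (hS : ∑ n : N, repChar ρ n * repChar σ ((n⁻¹ : N) : G) ≠ 0)
    {c : N} {l w : ℂ} (hl : ρ c = l • 1) (hw : σ c = w • 1) : l = w := by
  have hterm : ∀ n : N, w * (repChar ρ (n * c) * repChar σ (((n * c)⁻¹ : N) : G)) =
      l * (repChar ρ n * repChar σ ((n⁻¹ : N) : G)) := by
    intro n
    have hσ : w * repChar σ (((n * c)⁻¹ : N) : G) = repChar σ ((n⁻¹ : N) : G) := by
      rw [← repChar_mul_left_of_eq_smul_one hw]
      congr 1
      simp
    rw [repChar_mul_right_of_eq_smul_one hl, ← hσ]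
    ring
  refine (mul_right_cancel₀ hS ?_).symm
  calc w * ∑ n : N, repChar ρ n * repChar σ ((n⁻¹ : N) : G)
      = ∑ n : N, w * (repChar ρ (n * c) * repChar σ (((n * c)⁻¹ : N) : G)) := by
        rw [Finset.mul_sum]
        exact (Fintype.sum_equiv (Equiv.mulRight c) _ _ fun n => rfl).symm
    _ = l * ∑ n : N, repChar ρ n * repChar σ ((n⁻¹ : N) : G) := by
        simp only [hterm, Finset.mul_sum]

theorem eq_one_of_mem_center_of_apply_eq_one {E V W : Type*} [Group E]
    [AddCommGroup V] [Module ℂ V] [FiniteDimensional ℂ V] [AddCommGroup W] [Module ℂ W]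
    {N : Subgroup E} [Fintype N] {σ : Representation ℂ E V} (hσ : RepIrreducible σ)
    (hfaith : ∀ z : E, z ∈ Subgroup.center E → repChar σ z = repChar σ 1 → z = 1)
    {ρ : Representation ℂ N W} (hS : ∑ n : N, repChar ρ n * repChar σ ((n⁻¹ : N) : E) ≠ 0)
    {c : N} (hc : (c : E) ∈ Subgroup.center E) (hρc : ρ c = 1) : c = 1 := by
  obtain ⟨w, hw⟩ := hσ.exists_eq_smul_one_of_mem_center hc
  have hw1 : 1 = w := eq_of_eq_smul_one_of_sum_repChar_mul_ne_zero hS (by rw [hρc, one_smul]) hw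
  refine Subtype.ext (hfaith _ hc ?_)
  rw [repChar, repChar, hw, ← hw1, one_smul, map_one σ]

section faithfulOnCenter

variable {E W : Type*} [Group E] [AddCommGroup W] [Module ℂ W] [FiniteDimensional ℂ W]
  {N : Subgroup E} [N.Normal] {ρ : Representation ℂ N W}
  (hE : commutator E ≤ Subgroup.center E) (hρ : RepIrreducible ρ)
  (hfaith : ∀ c : N, (c : E) ∈ Subgroup.center E → ρ c = 1 → c = 1)
include hE hρ hfaith

/-- `g x g⁻¹ = ⁅g, x⁆ * x`, and `⁅g, x⁆` is central in `E`, so it acts by a scalar. -/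
theorem exists_repChar_conjHom_eq_mul (g : E) (x : N) :
    ∃ l : ℂ, repChar ρ (conjHom N g x) = l * repChar ρ x ∧ (l = 1 → conjHom N g x = x) := by
  set c : N := conjHom N g x * x⁻¹
  have hcE : (c : E) ∈ Subgroup.center E :=
    commutatorElement_mem_center_of_commutator_le_center hE g x
  have hcN : c ∈ Subgroup.center N :=
    Subgroup.mem_center_iff.mpr fun y => Subtype.ext (Subgroup.mem_center_iff.mp hcE y)
  obtain ⟨l, hl⟩ := hρ.exists_eq_smul_one_of_mem_center hcN
  have hconj : conjHom N g x = c * x := (inv_mul_cancel_right _ _).symm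
  refine ⟨l, by rw [hconj, repChar_mul_left_of_eq_smul_one hl], fun hl1 => ?_⟩
  rw [hconj, hfaith c hcE (by rw [hl, hl1, one_smul]), one_mul]

theorem repChar_eq_zero_of_notMem_center {x : N} (hx : x ∉ Subgroup.center N) :
    repChar ρ x = 0 := by
  obtain ⟨y, hy⟩ : ∃ y : N, y * x ≠ x * y := by simpa [Subgroup.mem_center_iff] using hx
  obtain ⟨l, hl, hl1⟩ := exists_repChar_conjHom_eq_mul hE hρ hfaith y x
  have hconj : conjHom N y x = y * x * y⁻¹ := rfl
  have hl_ne : l ≠ 1 := fun h => hy (by rw [← mul_inv_eq_iff_eq_mul, ← hconj, hl1 h])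
  rw [hconj, repChar_conj] at hl
  by_contra h0
  exact hl_ne ((mul_eq_right₀ h0).mp hl.symm)

theorem conjHom_preserves_repChar_iff (g : E) :
    (∀ x : N, repChar ρ (conjHom N g x) = repChar ρ x) ↔
      g ∈ Subgroup.centralizer (((Subgroup.center N).map N.subtype : Subgroup E) : Set E) := by
  rw [Subgroup.mem_centralizer_iff]
  constructor
  · rintro hinv _ ⟨z, hz, rfl⟩
    obtain ⟨l, hl, hl1⟩ := exists_repChar_conjHom_eq_mul hE hρ hfaith g z
    rw [hinv z] at hl
    have hgz : g * z * g⁻¹ = z :=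
      congrArg Subtype.val (hl1 ((mul_eq_right₀ (hρ.repChar_ne_zero_of_mem_center hz)).mp hl.symm))
    exact (mul_inv_eq_iff_eq_mul.mp hgz).symm
  · intro hg x
    by_cases hx : x ∈ Subgroup.center N
    · have hconj : conjHom N g x = x := Subtype.ext (by
        change g * x * g⁻¹ = x
        rw [← hg x ⟨x, hx, rfl⟩, mul_inv_cancel_right])
      rw [hconj]
    · obtain ⟨l, hl, -⟩ := exists_repChar_conjHom_eq_mul hE hρ hfaith g x
      rw [hl, repChar_eq_zero_of_notMem_center hE hρ hfaith hx, mul_zero]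

end faithfulOnCenter

theorem inertia_eq_centralizer_general
    {E V W : Type*} [Group E]
    [AddCommGroup V] [Module ℂ V] [FiniteDimensional ℂ V]
    [AddCommGroup W] [Module ℂ W] [FiniteDimensional ℂ W]
    (hE : commutator E ≤ Subgroup.center E)
    (N : Subgroup E) [N.Normal] [Fintype ↥N]
    (σ : Representation ℂ E V) (hσirr : RepIrreducible σ)
    (φ : E → ℂ) (hφ : φ = repChar σ)
    (hfaith : ∀ z : E, z ∈ Subgroup.center E → φ z = φ 1 → z = 1)
    (ρ : Representation ℂ ↥N W) (hρirr : RepIrreducible ρ)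
    (χ : ↥N → ℂ) (hχ : χ = repChar ρ)
    (hconst : (Fintype.card ↥N : ℂ)⁻¹ * ∑ n : ↥N, χ n * φ ((n⁻¹ : ↥N) : E) ≠ 0) :
    ∀ g : E, (∀ x : ↥N, χ (conjHom N g x) = χ x) ↔
      g ∈ Subgroup.centralizer (((Subgroup.center ↥N).map N.subtype : Subgroup E) : Set E) := by
  subst hφ hχ
  have hS := right_ne_zero_of_mul hconst
  exact conjHom_preserves_repChar_iff hE hρirr
    fun c hc => eq_one_of_mem_center_of_apply_eq_one hσirr hfaith hS hc

/-- **"Tacheles" Lemma.** If `E' ⊆ Z(E)`, `φ ∈ Irr(E)` is faithful on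
`Z(E)`, and `χ` is an irreducible constituent of `φ↓N`, then the inertia group of `χ`
in `E` is the centralizer of `Z(N)` in `E`. -/
theorem inertia_eq_centralizer
    {E V W : Type*} [Group E] [Fintype E]
    [AddCommGroup V] [Module ℂ V] [FiniteDimensional ℂ V]
    [AddCommGroup W] [Module ℂ W] [FiniteDimensional ℂ W]
    (hE : commutator E ≤ Subgroup.center E)
    (N : Subgroup E) [N.Normal] [Fintype ↥N]
    (σ : Representation ℂ E V) (hσirr : RepIrreducible σ)
    (φ : E → ℂ) (hφ : φ = repChar σ)
    (hfaith : ∀ z : E, z ∈ Subgroup.center E → φ z = φ 1 → z = 1)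
    (ρ : Representation ℂ ↥N W) (hρirr : RepIrreducible ρ)
    (χ : ↥N → ℂ) (hχ : χ = repChar ρ)
    (hconst : (Fintype.card ↥N : ℂ)⁻¹ * ∑ n : ↥N, χ n * φ ((n⁻¹ : ↥N) : E) ≠ 0) :
    ∀ g : E, (∀ x : ↥N, χ (conjHom N g x) = χ x) ↔
      g ∈ Subgroup.centralizer (((Subgroup.center ↥N).map N.subtype : Subgroup E) : Set E) :=
  inertia_eq_centralizer_general hE N σ hσirr φ hφ hfaith ρ hρirr χ hχ hconst
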